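/- (Second-order random target lemma) Under the equilibrium assumption, suppose that for every i ∈ V the edge-chain return time τ̂⁺_{e→in_i} depends only on i and not on the edge e ∈ in_i. Then there is a constant κ̃ such that Σ_{j∈V} π_j τ̃_{i→j} = κ̃ for every i ∈ V, where τ̃_{i→j} are the second-order mean hitting times and π is the node stationary distribution. Moreover κ̃ = κ − b^T π, where κ is the Kemeny constant of the edge chain P̂ and b is the offset vector from the representation of set-hitting times. -/

import Mathlib

/-!
Kac's formula for the edge chain and the set `in_i` of edges entering `i` reads
`∑_{e ∈ in_i} π̂_e τ̂⁺_{e→in_i} = 1`. When the return time is constant on `in_i` this says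
`π_i τ̂⁺_{f→in_i} = 1` for every `f ∈ in_i`, i.e. `π_{ter f} α_f = π̂_f`. Substituting the
representation of `τ̂_{e→in_j}` into `∑_j π_j τ̂_{e→in_j}` therefore gives
`∑_f π̂_f τ̂_{e→f} − bᵀπ = κ − bᵀπ` for every edge `e`, and `∑_j π_j τ̃_{i→j}` is a convex
combination of these equal numbers.

For Kac's formula, let `w n = P_π̂(T_S > n)`. Stationarity and the first-step recursion give
`w n = w (n + 1) + ∑_{e ∈ S} π̂_e ∑_j P̂_{ej} P_j(T_S > n)`; irreducibility makes `w n → 0`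
(geometrically), so these terms sum to `w 0 = π̂(Sᶜ)`, while they also sum to
`∑_{e ∈ S} π̂_e (τ̂⁺_{e→S} − 1)`.
-/

open scoped ENNReal Classical

/-- `hitBy P S n i = P(T_S ≤ n | Y_0 = i)` for a Markov chain with transition matrix `P`. -/
noncomputable def hitBy {V : Type*} (P : V → V → ℝ≥0∞) (S : Set V) : ℕ → V → ℝ≥0∞
  | 0, i => if i ∈ S then 1 else 0
  | n + 1, i => if i ∈ S then 1 else ∑' j, P i j * hitBy P S n j

/-- The mean hitting time `τ_{i→S} = E[T_S | Y_0 = i]` (extended-real valued). -/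
noncomputable def meanHit {V : Type*} (P : V → V → ℝ≥0∞) (S : Set V) (i : V) : ℝ≥0∞ :=
  ∑' n, (1 - hitBy P S n i)

/-- The mean return time `τ⁺_{i→S} = 1 + ∑_j P_{ij} τ_{j→S}`. -/
noncomputable def returnTime {V : Type*} (P : V → V → ℝ≥0∞) (S : Set V) (i : V) : ℝ≥0∞ :=
  1 + ∑' j, P i j * meanHit P S j

open Filter Topology

theorem ENNReal.tsum_eq_of_eq_add_succ {w K : ℕ → ℝ≥0∞} (h : ∀ n, w n = K n + w (n + 1))
    (hw : Tendsto w atTop (𝓝 0)) : ∑' n, K n = w 0 := by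
  have hpartial : ∀ N, (∑ n ∈ Finset.range N, K n) + w N = w 0 := by
    intro N
    induction N with
    | zero => simp
    | succ N ih => rw [Finset.sum_range_succ, add_assoc, ← h, ih]
  have hlim := (ENNReal.tendsto_nat_tsum K).add hw
  rw [add_zero] at hlim
  simp only [hpartial] at hlim
  exact tendsto_nhds_unique hlim tendsto_const_nhds

section MarkovChain

variable {E : Type*} {P : E → E → ℝ≥0∞} {S : Set E}

theorem hitBy_of_mem {e : E} (he : e ∈ S) (n : ℕ) : hitBy P S n e = 1 := by
  cases n <;> simp [hitBy, he]

variable [Fintype E]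

theorem hitBy_succ (n : ℕ) (e : E) :
    hitBy P S (n + 1) e = if e ∈ S then 1 else ∑ j, P e j * hitBy P S n j := by
  rw [hitBy, tsum_fintype]

theorem hitBy_mono (e : E) : Monotone (hitBy P S · e) := by
  have hsucc : ∀ n (e : E), hitBy P S n e ≤ hitBy P S (n + 1) e := by
    intro n
    induction n with
    | zero => intro e; by_cases he : e ∈ S <;> simp [hitBy, he]
    | succ n ih =>
      intro e
      rw [hitBy_succ, hitBy_succ]
      split_ifs
      · exact le_rfl
      · gcongr with j; exact ih j
  exact monotone_nat_of_le_succ fun n => hsucc n e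

theorem hitBy_le_one (hst : ∀ e, ∑ f, P e f = 1) (n : ℕ) (e : E) : hitBy P S n e ≤ 1 := by
  induction n generalizing e with
  | zero => by_cases he : e ∈ S <;> simp [hitBy, he]
  | succ n ih =>
    rw [hitBy_succ]
    split_ifs
    · exact le_rfl
    · calc ∑ j, P e j * hitBy P S n j ≤ ∑ j, P e j * 1 := by gcongr with j; exact ih j
        _ = 1 := by simp [hst e]

theorem one_sub_hitBy_succ (hst : ∀ e, ∑ f, P e f = 1) (n : ℕ) (e : E) :
    1 - hitBy P S (n + 1) e = if e ∈ S then 0 else ∑ j, P e j * (1 - hitBy P S n j) := by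
  rw [hitBy_succ]
  split_ifs with he
  · exact tsub_self 1
  have hle : ∑ j, P e j * hitBy P S n j ≤ 1 := by
    calc ∑ j, P e j * hitBy P S n j ≤ ∑ j, P e j * 1 := by
          gcongr with j; exact hitBy_le_one hst n j
      _ = 1 := by simp [hst e]
  refine ENNReal.sub_eq_of_eq_add (ne_top_of_le_ne_top ENNReal.one_ne_top hle) ?_
  rw [← Finset.sum_add_distrib]
  conv_lhs => rw [← hst e]
  refine Finset.sum_congr rfl fun j _ => ?_
  rw [← mul_add, tsub_add_cancel_of_le (hitBy_le_one hst n j), mul_one]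

theorem exists_pos_hitBy_of_reachable {s : E} (hs : s ∈ S) {e : E}
    (h : Relation.ReflTransGen (fun a b => 0 < P a b) e s) : ∃ n, 0 < hitBy P S n e := by
  induction h using Relation.ReflTransGen.head_induction_on with
  | refl => exact ⟨0, by simp [hitBy, hs]⟩
  | @head x y hxy _ ih =>
    obtain ⟨n, hn⟩ := ih
    refine ⟨n + 1, ?_⟩
    rw [hitBy_succ]
    split_ifs
    · exact zero_lt_one
    · exact (ENNReal.mul_pos hxy.ne' hn.ne').trans_le <|
        Finset.single_le_sum (f := fun j => P x j * hitBy P S n j) (fun _ _ => zero_le)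
          (Finset.mem_univ y)

theorem exists_one_sub_hitBy_le_lt_one
    (hirr : ∀ e f : E, Relation.ReflTransGen (fun a b => 0 < P a b) e f) {s : E} (hs : s ∈ S) :
    ∃ N, ∃ c < 1, ∀ e, 1 - hitBy P S N e ≤ c := by
  choose n hn using fun e => exists_pos_hitBy_of_reachable hs (hirr e s)
  set N := Finset.univ.sup n
  refine ⟨N, Finset.univ.sup fun e => 1 - hitBy P S N e, ?_,
    fun e => Finset.le_sup (f := fun e => 1 - hitBy P S N e) (Finset.mem_univ e)⟩
  refine (Finset.sup_lt_iff zero_lt_one).mpr fun e _ => ?_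
  have hpos : 0 < hitBy P S N e :=
    (hn e).trans_le (hitBy_mono e (Finset.le_sup (Finset.mem_univ e)))
  exact ENNReal.sub_lt_self ENNReal.one_ne_top one_ne_zero hpos.ne'

theorem one_sub_hitBy_add_le_mul (hst : ∀ e, ∑ f, P e f = 1) {N : ℕ} {c : ℝ≥0∞}
    (hc : ∀ e, 1 - hitBy P S N e ≤ c) (n : ℕ) (e : E) :
    1 - hitBy P S (n + N) e ≤ c * (1 - hitBy P S n e) := by
  induction n generalizing e with
  | zero => by_cases he : e ∈ S <;> simp [hitBy, hitBy_of_mem, he, hc e]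
  | succ n ih =>
    rw [Nat.add_right_comm, one_sub_hitBy_succ hst, one_sub_hitBy_succ hst]
    split_ifs
    · exact zero_le
    rw [Finset.mul_sum]
    refine Finset.sum_le_sum fun j _ => ?_
    calc P e j * (1 - hitBy P S (n + N) j) ≤ P e j * (c * (1 - hitBy P S n j)) := by
          gcongr; exact ih j
      _ = c * (P e j * (1 - hitBy P S n j)) := mul_left_comm _ _ _

theorem one_sub_hitBy_mul_le_pow (hst : ∀ e, ∑ f, P e f = 1) {N : ℕ} {c : ℝ≥0∞}
    (hc : ∀ e, 1 - hitBy P S N e ≤ c) (k : ℕ) (e : E) :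
    1 - hitBy P S (k * N) e ≤ c ^ k := by
  induction k generalizing e with
  | zero => exact tsub_le_self.trans (pow_zero c).ge
  | succ k ih =>
    calc 1 - hitBy P S ((k + 1) * N) e = 1 - hitBy P S (k * N + N) e := by rw [Nat.succ_mul]
      _ ≤ c * (1 - hitBy P S (k * N) e) := one_sub_hitBy_add_le_mul hst hc _ e
      _ ≤ c * c ^ k := by gcongr; exact ih e
      _ = c ^ (k + 1) := (pow_succ' c k).symm

theorem tendsto_one_sub_hitBy (hst : ∀ e, ∑ f, P e f = 1)
    (hirr : ∀ e f : E, Relation.ReflTransGen (fun a b => 0 < P a b) e f) {s : E} (hs : s ∈ S)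
    (e : E) : Tendsto (fun n => 1 - hitBy P S n e) atTop (𝓝 0) := by
  obtain ⟨N, c, hc1, hc⟩ := exists_one_sub_hitBy_le_lt_one hirr hs
  have hanti : Antitone fun n => 1 - hitBy P S n e :=
    fun m n hmn => tsub_le_tsub_left (hitBy_mono e hmn) 1
  convert tendsto_atTop_iInf hanti
  refine le_antisymm zero_le ?_
  exact ge_of_tendsto' (ENNReal.tendsto_pow_atTop_nhds_zero_of_lt_one hc1)
    fun k => (iInf_le _ (k * N)).trans (one_sub_hitBy_mul_le_pow hst hc k e)

theorem returnTime_eq_one_add_tsum (e : E) :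
    returnTime P S e = 1 + ∑' n, ∑ j, P e j * (1 - hitBy P S n j) := by
  simp only [returnTime, meanHit, tsum_fintype, ← ENNReal.tsum_mul_left]
  rw [Summable.tsum_finsetSum fun _ _ => ENNReal.summable]

theorem sum_mul_sum_eq_of_stationary {μ : E → ℝ≥0∞} (hμ : ∀ f, ∑ e, μ e * P e f = μ f)
    (g : E → ℝ≥0∞) : ∑ e, μ e * ∑ j, P e j * g j = ∑ j, μ j * g j := by
  simp only [Finset.mul_sum, ← mul_assoc]
  rw [Finset.sum_comm]
  simp only [← Finset.sum_mul, hμ]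

theorem sum_mul_returnTime_eq_one [DecidablePred (· ∈ S)] (hst : ∀ e, ∑ f, P e f = 1)
    (hirr : ∀ e f : E, Relation.ReflTransGen (fun a b => 0 < P a b) e f)
    {μ : E → ℝ≥0∞} (hμsum : ∑ e, μ e = 1) (hμ : ∀ f, ∑ e, μ e * P e f = μ f)
    {s : E} (hs : s ∈ S) :
    ∑ e ∈ Finset.univ.filter (· ∈ S), μ e * returnTime P S e = 1 := by
  set w : ℕ → ℝ≥0∞ := fun n => ∑ e, μ e * (1 - hitBy P S n e)
  set K : ℕ → ℝ≥0∞ := fun n =>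
    ∑ e ∈ Finset.univ.filter (· ∈ S), μ e * ∑ j, P e j * (1 - hitBy P S n j)
  have hstep : ∀ n, w n = K n + w (n + 1) := by
    intro n
    simp only [w, K]
    rw [← sum_mul_sum_eq_of_stationary hμ, Finset.sum_filter, ← Finset.sum_add_distrib]
    refine Finset.sum_congr rfl fun e _ => ?_
    rw [one_sub_hitBy_succ hst]
    split_ifs <;> simp
  have hw : Tendsto w atTop (𝓝 0) := by
    rw [show (0 : ℝ≥0∞) = ∑ e, μ e * 0 by simp]
    refine tendsto_finsetSum _ fun e _ => ENNReal.Tendsto.const_mul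
      (tendsto_one_sub_hitBy hst hirr hs e) (Or.inr ?_)
    exact ENNReal.sum_ne_top.mp (hμsum ▸ ENNReal.one_ne_top) e (Finset.mem_univ e)
  have hw0 : w 0 = ∑ e ∈ Finset.univ.filter (· ∉ S), μ e := by
    simp only [w, Finset.sum_filter]
    refine Finset.sum_congr rfl fun e _ => ?_
    by_cases he : e ∈ S <;> simp [hitBy, he]
  calc ∑ e ∈ Finset.univ.filter (· ∈ S), μ e * returnTime P S e
      = ∑ e ∈ Finset.univ.filter (· ∈ S), μ e + ∑' n, K n := by
        simp only [K, returnTime_eq_one_add_tsum, mul_add, mul_one, Finset.sum_add_distrib,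
          ← ENNReal.tsum_mul_left]
        rw [Summable.tsum_finsetSum fun _ _ => ENNReal.summable]
    _ = 1 := by
        rw [ENNReal.tsum_eq_of_eq_add_succ hstep hw, hw0, Finset.sum_filter_add_sum_filter_not,
          hμsum]

theorem sum_filter_mul_eq_one_of_returnTime_eq [DecidablePred (· ∈ S)]
    (hst : ∀ e, ∑ f, P e f = 1)
    (hirr : ∀ e f : E, Relation.ReflTransGen (fun a b => 0 < P a b) e f)
    {μ : E → ℝ≥0∞} (hμsum : ∑ e, μ e = 1) (hμ : ∀ f, ∑ e, μ e * P e f = μ f)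
    {s : E} (hs : s ∈ S) {r : ℝ≥0∞} (hr : ∀ e ∈ S, returnTime P S e = r) :
    (∑ e ∈ Finset.univ.filter (· ∈ S), μ e) * r = 1 := by
  rw [Finset.sum_mul, ← sum_mul_returnTime_eq_one hst hirr hμsum hμ hs]
  exact Finset.sum_congr rfl fun e he => by rw [hr e (Finset.mem_filter.mp he).2]

end MarkovChain

theorem ENNReal.sum_toReal_div_sum {ι : Type*} {s : Finset ι} {w : ι → ℝ≥0∞}
    (hw : ∀ i ∈ s, w i ≠ ⊤) (h0 : ∑ i ∈ s, w i ≠ 0) :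
    ∑ i ∈ s, (w i / ∑ j ∈ s, w j).toReal = 1 := by
  simp only [ENNReal.toReal_div, ← Finset.sum_div, ← ENNReal.toReal_sum hw]
  exact div_self (ENNReal.toReal_ne_zero.mpr ⟨h0, ENNReal.sum_ne_top.mpr hw⟩)

theorem sum_mul_sum_fiber_sub {V E : Type*} [Fintype V] [Fintype E] [DecidableEq V]
    {ter : E → V} {p b : V → ℝ} {a q : E → ℝ} (hpa : ∀ f, p (ter f) * a f = q f) (x : E → ℝ) :
    ∑ i, p i * (∑ f ∈ Finset.univ.filter (ter · = i), a f * x f - b i) =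
      ∑ f, q f * x f - ∑ i, b i * p i := by
  simp only [mul_sub, Finset.mul_sum, Finset.sum_sub_distrib, mul_comm (p _) (b _)]
  congr 1
  rw [← Finset.sum_fiberwise Finset.univ ter fun f => q f * x f]
  refine Finset.sum_congr rfl fun i _ => Finset.sum_congr rfl fun f hf => ?_
  rw [← hpa, (Finset.mem_filter.mp hf).2, mul_assoc]

theorem secondOrder_random_target_general {V E : Type*} [Fintype V] [Fintype E]
    [DecidableEq V]
    (ter : E → V)
    (hin : ∀ i : V, ∃ e : E, ter e = i)
    (Phat : E → E → ℝ≥0∞)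
    (hst : ∀ e, ∑ f, Phat e f = 1)
    (hirr : ∀ e f : E, Relation.ReflTransGen (fun a b => 0 < Phat a b) e f)
    (πhat : E → ℝ≥0∞) (hπsum : ∑ e, πhat e = 1)
    (hπstat : ∀ f, ∑ e, πhat e * Phat e f = πhat f)
    (π : V → ℝ≥0∞)
    (hπ : ∀ i, π i = ∑ e ∈ Finset.univ.filter (fun e => ter e = i), πhat e)
    -- real-valued mean hitting times `τ̂_{e→S}` of the edge chain
    (τhat : E → Set E → ℝ)
    -- the edge-chain return times to `in_i` depend only on `i` and not on `e ∈ in_i`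
    (hret : ∀ e e' : E, ter e = ter e' →
      returnTime Phat {f | ter f = ter e} e = returnTime Phat {f | ter f = ter e'} e')
    -- the coefficients `α_f = π̂_f τ̂⁺_{f→in_{ter f}}`
    (a : E → ℝ)
    (ha : ∀ f, a f = (πhat f * returnTime Phat {g | ter g = ter f} f).toReal)
    -- the offset vector `b` of the representation of set-hitting times (Lemma 2.6)
    (b : V → ℝ)
    (hb : ∀ i (e : E), τhat e {f | ter f = i} =
      (∑ f ∈ Finset.univ.filter (fun f => ter f = i), a f * τhat e {f}) - b i)
    -- `κ` is the Kemeny constant of the edge chain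
    (κ : ℝ) (hκ : ∀ e : E, ∑ f, (πhat f).toReal * τhat e {f} = κ)
    -- the second-order mean hitting times at equilibrium:
    -- `τ̃_{i→j} = ∑_{e∈in_i} λ_e τ̂_{e→in_j}` with `λ_e = π̂_e/π_{ter e}`
    (τtilde : V → V → ℝ)
    (hτtilde : ∀ i j, τtilde i j =
      ∑ e ∈ Finset.univ.filter (fun e => ter e = i),
        (πhat e / π i).toReal * τhat e {f | ter f = j}) :
    ∀ i : V, ∑ j, (π j).toReal * τtilde i j = κ - ∑ j, b j * (π j).toReal := by
  have hkac : ∀ f, π (ter f) * returnTime Phat {g | ter g = ter f} f = 1 := fun f => by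
    rw [hπ]
    refine sum_filter_mul_eq_one_of_returnTime_eq (S := {g | ter g = ter f}) hst hirr hπsum
      hπstat (s := f) rfl fun e (he : ter e = ter f) => ?_
    simpa only [he] using hret e f he
  have hweight : ∀ f, (π (ter f)).toReal * a f = (πhat f).toReal := fun f => by
    rw [ha, ← ENNReal.toReal_mul, mul_left_comm, hkac, mul_one]
  have hedge : ∀ e, ∑ j, (π j).toReal * τhat e {f | ter f = j} = κ - ∑ j, b j * (π j).toReal :=
    fun e => by
      simp only [hb]
      rw [sum_mul_sum_fiber_sub (p := fun j => (π j).toReal) hweight, hκ]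
  intro i
  have hmass : ∑ e ∈ Finset.univ.filter (fun e => ter e = i), (πhat e / π i).toReal = 1 := by
    obtain ⟨f, rfl⟩ := hin i
    have hπ0 : π (ter f) ≠ 0 := left_ne_zero_of_mul_eq_one (hkac f)
    rw [hπ] at hπ0 ⊢
    refine ENNReal.sum_toReal_div_sum (fun e _ => ?_) hπ0
    exact ENNReal.sum_ne_top.mp (hπsum ▸ ENNReal.one_ne_top) e (Finset.mem_univ e)
  calc ∑ j, (π j).toReal * τtilde i j
      = ∑ e ∈ Finset.univ.filter (fun e => ter e = i),
          (πhat e / π i).toReal * ∑ j, (π j).toReal * τhat e {f | ter f = j} := by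
        simp only [hτtilde, Finset.mul_sum]
        rw [Finset.sum_comm]
        exact Finset.sum_congr rfl fun e _ =>
          Finset.sum_congr rfl fun j _ => mul_left_comm _ _ _
    _ = κ - ∑ j, b j * (π j).toReal := by simp only [hedge, ← Finset.sum_mul, hmass, one_mul]

/-- **Second-order random target lemma.** At equilibrium, if the edge-chain return time
`τ̂⁺_{e→in_i}` depends only on `i` and not on `e ∈ in_i`, then `∑_j π_j τ̃_{i→j}` is a
constant `κ̃` independent of `i`; moreover `κ̃ = κ − bᵀπ`, where `κ` is the Kemeny
constant of the edge chain and `b` the offset vector in the representation of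
set-hitting times `τ̂_{e→in_i} = ∑_{f∈in_i} α_f τ̂_{e→f} − b_i`. -/
theorem secondOrder_random_target {V E : Type*} [Fintype V] [Fintype E]
    [DecidableEq V] [DecidableEq E]
    (sou ter : E → V)
    (hinj : Function.Injective fun e => (sou e, ter e))
    (hin : ∀ i : V, ∃ e : E, ter e = i)
    (Phat : E → E → ℝ≥0∞)
    (hsupp : ∀ e f, Phat e f ≠ 0 → ter e = sou f)
    (hst : ∀ e, ∑ f, Phat e f = 1)
    (hirr : ∀ e f : E, Relation.ReflTransGen (fun a b => 0 < Phat a b) e f)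
    (πhat : E → ℝ≥0∞) (hπpos : ∀ e, 0 < πhat e) (hπsum : ∑ e, πhat e = 1)
    (hπstat : ∀ f, ∑ e, πhat e * Phat e f = πhat f)
    (π : V → ℝ≥0∞)
    (hπ : ∀ i, π i = ∑ e ∈ Finset.univ.filter (fun e => ter e = i), πhat e)
    -- real-valued mean hitting times `τ̂_{e→S}` of the edge chain
    (τhat : E → Set E → ℝ) (hτhat : ∀ e S, τhat e S = (meanHit Phat S e).toReal)
    -- the edge-chain return times to `in_i` depend only on `i` and not on `e ∈ in_i`
    (hret : ∀ e e' : E, ter e = ter e' →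
      returnTime Phat {f | ter f = ter e} e = returnTime Phat {f | ter f = ter e'} e')
    -- the coefficients `α_f = π̂_f τ̂⁺_{f→in_{ter f}}`
    (a : E → ℝ)
    (ha : ∀ f, a f = (πhat f * returnTime Phat {g | ter g = ter f} f).toReal)
    -- the offset vector `b` of the representation of set-hitting times (Lemma 2.6)
    (b : V → ℝ)
    (hb : ∀ i (e : E), τhat e {f | ter f = i} =
      (∑ f ∈ Finset.univ.filter (fun f => ter f = i), a f * τhat e {f}) - b i)
    -- `κ` is the Kemeny constant of the edge chain
    (κ : ℝ) (hκ : ∀ e : E, ∑ f, (πhat f).toReal * τhat e {f} = κ)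
    -- the second-order mean hitting times at equilibrium:
    -- `τ̃_{i→j} = ∑_{e∈in_i} λ_e τ̂_{e→in_j}` with `λ_e = π̂_e/π_{ter e}`
    (τtilde : V → V → ℝ)
    (hτtilde : ∀ i j, τtilde i j =
      ∑ e ∈ Finset.univ.filter (fun e => ter e = i),
        (πhat e / π i).toReal * τhat e {f | ter f = j}) :
    ∀ i : V, ∑ j, (π j).toReal * τtilde i j = κ - ∑ j, b j * (π j).toReal :=
  secondOrder_random_target_general ter hin Phat hst hirr πhat hπsum hπstat π hπ τhat hret a ha b hb
    κ hκ τtilde hτtilde
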